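/- arXiv:2110.02090 — 2 statements merged into one kernel-verified Lean document; each statement's English description precedes it below -/
import Mathlib

section
/- Let $A \subset \mathbb{R}$ be a measurable set with $0 < |A| < \infty$, let $N \ge 1$, and let $g_1,\dots,g_N \in L^2(A)$ satisfy: for every subset $U \subseteq \{1,\dots,N\}$ and every $x \in A$, $|\sum_{i \in U} g_i(x)| \le M\sqrt{|U|}$. Then there exists an index $i_0$ such that $\int_A |g_{i_0}|^2 \le \frac{6 M^2 |A|}{\sqrt{N}}$. -/
/-!
Splitting the real and imaginary parts of the `gᵢ(x)` by sign turns the subset-sum bound into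
`∑ᵢ |gᵢ(x)| ≤ 4M√N`, and the case `U = {i}` gives `|gᵢ(x)| ≤ M`; hence
`∑ᵢ |gᵢ(x)|² ≤ M ∑ᵢ |gᵢ(x)| ≤ 4M²√N` on `A`. Integrating over `A`, the `N` numbers `∫_A |gᵢ|²`
sum to at most `4M²√N |A|`, so the smallest is at most `4M²|A|/√N`.
-/

open MeasureTheory Real

open Finset in
theorem Finset.sum_abs_le_two_mul_of_forall_subset {ι : Type*} (s : Finset ι) (a : ι → ℝ) {C : ℝ}
    (h : ∀ U ⊆ s, |∑ i ∈ U, a i| ≤ C) : ∑ i ∈ s, |a i| ≤ 2 * C := by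
  set P := s.filter (fun i => 0 ≤ a i)
  set Q := s.filter (fun i => ¬ 0 ≤ a i)
  have hP : ∑ i ∈ P, |a i| ≤ C := by
    rw [sum_congr rfl fun i hi => abs_of_nonneg (mem_filter.1 hi).2]
    exact (le_abs_self _).trans (h P (filter_subset _ _))
  have hQ : ∑ i ∈ Q, |a i| ≤ C := by
    rw [sum_congr rfl fun i hi => abs_of_neg (not_le.1 (mem_filter.1 hi).2), sum_neg_distrib]
    exact (neg_le_abs _).trans (h Q (filter_subset _ _))
  rw [← sum_filter_add_sum_filter_not s (fun i => 0 ≤ a i)]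
  linarith

theorem Complex.sum_norm_le_four_mul_of_forall_subset {ι : Type*} (s : Finset ι) (z : ι → ℂ)
    {C : ℝ} (h : ∀ U ⊆ s, ‖∑ i ∈ U, z i‖ ≤ C) : ∑ i ∈ s, ‖z i‖ ≤ 4 * C := by
  have hre := Finset.sum_abs_le_two_mul_of_forall_subset s (fun i => (z i).re) fun U hU => by
    rw [← Complex.re_sum]; exact (Complex.abs_re_le_norm _).trans (h U hU)
  have him := Finset.sum_abs_le_two_mul_of_forall_subset s (fun i => (z i).im) fun U hU => by
    rw [← Complex.im_sum]; exact (Complex.abs_im_le_norm _).trans (h U hU)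
  calc ∑ i ∈ s, ‖z i‖ ≤ ∑ i ∈ s, (|(z i).re| + |(z i).im|) :=
        Finset.sum_le_sum fun i _ => Complex.norm_le_abs_re_add_abs_im (z i)
    _ ≤ 4 * C := by rw [Finset.sum_add_distrib]; linarith

theorem Complex.sum_sq_norm_le_of_forall_subset {ι : Type*} (s : Finset ι) (z : ι → ℂ)
    {M : ℝ} (hM : 0 ≤ M) (h : ∀ U ⊆ s, ‖∑ i ∈ U, z i‖ ≤ M * √U.card) :
    ∑ i ∈ s, ‖z i‖ ^ 2 ≤ 4 * M ^ 2 * √s.card := by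
  have hle : ∀ i ∈ s, ‖z i‖ ≤ M := fun i hi => by
    simpa using h {i} (Finset.singleton_subset_iff.2 hi)
  have hsum : ∑ i ∈ s, ‖z i‖ ≤ 4 * (M * √s.card) :=
    Complex.sum_norm_le_four_mul_of_forall_subset s z fun U hU =>
      (h U hU).trans (by gcongr)
  calc ∑ i ∈ s, ‖z i‖ ^ 2 ≤ ∑ i ∈ s, M * ‖z i‖ :=
        Finset.sum_le_sum fun i hi => by
          rw [sq]; exact mul_le_mul_of_nonneg_right (hle i hi) (norm_nonneg _)
    _ = M * ∑ i ∈ s, ‖z i‖ := (Finset.mul_sum _ _ _).symm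
    _ ≤ M * (4 * (M * √s.card)) := mul_le_mul_of_nonneg_left hsum hM
    _ = 4 * M ^ 2 * √s.card := by ring

open Finset in
theorem MeasureTheory.exists_setIntegral_le_of_sum_le {α ι : Type*} [MeasurableSpace α]
    {μ : Measure α} {A : Set α} (hA : μ A < ⊤) {s : Finset ι} (hs : s.Nonempty)
    {f : ι → α → ℝ} (hf : ∀ i ∈ s, IntegrableOn (f i) A μ)
    (hf₀ : ∀ i ∈ s, ∀ x ∈ A, 0 ≤ f i x) {C : ℝ} (hC : ∀ x ∈ A, ∑ i ∈ s, f i x ≤ C) :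
    ∃ i ∈ s, ∫ x in A, f i x ∂μ ≤ C * μ.real A / s.card := by
  have hint : ∫ x in A, ∑ i ∈ s, f i x ∂μ ≤ C * μ.real A :=
    (le_abs_self _).trans <| norm_setIntegral_le_of_norm_le_const hA fun x hx => by
      rw [Real.norm_of_nonneg (sum_nonneg fun i hi => hf₀ i hi x hx)]
      exact hC x hx
  rw [integral_finsetSum s hf] at hint
  refine exists_le_of_sum_le hs ?_
  rwa [sum_const, nsmul_eq_mul, mul_div_cancel₀ _ (by exact_mod_cast hs.card_pos.ne')]

theorem exists_small_L2_of_subset_sum_bound_general (A : Set ℝ)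
    (hfin : volume A < ⊤)
    (N : ℕ) (hN : 1 ≤ N) (M : ℝ) (hM : 0 < M) (g : Fin N → ℝ → ℂ)
    (hg : ∀ i, MemLp (g i) 2 (volume.restrict A))
    (hbd : ∀ U : Finset (Fin N), ∀ x ∈ A, ‖∑ i ∈ U, g i x‖ ≤ M * Real.sqrt U.card) :
    ∃ i₀, ∫ x in A, ‖g i₀ x‖ ^ 2 ≤ 6 * M ^ 2 * (volume A).toReal / Real.sqrt N := by
  have hpt : ∀ x ∈ A, ∑ i, ‖g i x‖ ^ 2 ≤ 4 * M ^ 2 * √N := fun x hx => by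
    simpa using Complex.sum_sq_norm_le_of_forall_subset Finset.univ (g · x) hM.le
      fun U _ => hbd U x hx
  obtain ⟨i₀, -, hi₀⟩ := exists_setIntegral_le_of_sum_le hfin
    (Finset.univ_nonempty_iff.2 (Fin.pos_iff_nonempty.1 hN))
    (fun i _ => (memLp_two_iff_integrable_sq_norm (hg i).1).1 (hg i))
    (fun i _ x _ => sq_nonneg ‖g i x‖) hpt
  have hN₀ : (0 : ℝ) < N := by exact_mod_cast hN
  refine ⟨i₀, hi₀.trans ?_⟩
  calc 4 * M ^ 2 * √N * volume.real A / (Finset.univ : Finset (Fin N)).card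
      = 4 * M ^ 2 * (volume A).toReal / √N := by
        rw [Finset.card_univ, Fintype.card_fin, Measure.real]
        field_simp
        rw [Real.sq_sqrt hN₀.le]
        ring
    _ ≤ 6 * M ^ 2 * (volume A).toReal / √N := by gcongr; norm_num

/-- Auxiliary claim: if every sub-collection of the `gᵢ` has pointwise bounded sums
`|∑_{i ∈ U} gᵢ(x)| ≤ M √|U|` on `A`, then some `g_{i₀}` has small `L²(A)` norm. -/
theorem exists_small_L2_of_subset_sum_bound (A : Set ℝ) (hA : MeasurableSet A)
    (h0 : 0 < volume A) (hfin : volume A < ⊤)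
    (N : ℕ) (hN : 1 ≤ N) (M : ℝ) (hM : 0 < M) (g : Fin N → ℝ → ℂ)
    (hg : ∀ i, MemLp (g i) 2 (volume.restrict A))
    (hbd : ∀ U : Finset (Fin N), ∀ x ∈ A, ‖∑ i ∈ U, g i x‖ ≤ M * Real.sqrt U.card) :
    ∃ i₀, ∫ x in A, ‖g i₀ x‖ ^ 2 ≤ 6 * M ^ 2 * (volume A).toReal / Real.sqrt N :=
  exists_small_L2_of_subset_sum_bound_general A hfin N hN M hM g hg hbd
end

section
/- Let $S \subset \mathbb{R}$ be a bounded measurable set of positive measure, let $w \in L^1(S)$ be positive a.e., and suppose there exist, for every $\varepsilon > 0$, a measurable subset $A \subset S$ of positive measure, a real $t$, and a constant $c > 0$ independent of $\varepsilon$, such that $w < \varepsilon$ on $A$, $A + t \subset S$, and $w > c$ on $A + t$. Then no set $\Lambda \subset \mathbb{R}$ has the property that $\{e^{2\pi i \lambda x} : \lambda \in \Lambda\}$ is a Riesz basis for the weighted space $L^2(S, w\,dx)$. -/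
/-!
Take `B ⊆ A` of positive measure on which, besides `w < ε`, also `w ≥ η > 0`, and approximate
`1_B` in `L²(S, w)` by an exponential sum `P`. Then `‖P‖²_w = O(ε |B|)`, while the lower bound
`η` forces `∫_B |P|² ≥ |B| / 4`. Translating `P` by `t` multiplies its coefficients by unimodular
factors, so the two Riesz bounds give `‖P(· - t)‖²_w ≤ K² ‖P‖²_w = O(K² ε |B|)`. But `P(· - t)`
carries the unweighted mass of `P` on `B` over to `B + t ⊆ S`, where `w > c`, so
`‖P(· - t)‖²_w ≥ c |B| / 4`; for `ε` small compared with `c / K²` this is a contradiction.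
-/

open MeasureTheory Real

/-- The exponential `e(λx) = e^{2πiλx}`. -/
noncomputable def expFun (l x : ℝ) : ℂ := Complex.exp (2 * π * Complex.I * l * x)

/-- `E(Λ)` is a Riesz basis for the weighted space `L²(S, w dx)`: the system is
complete, and satisfies two-sided `ℓ²` bounds for all finite linear combinations. -/
def IsRieszBasisExpW (S : Set ℝ) (w : ℝ → ℝ) (Λ : Set ℝ) : Prop :=
  (∀ f : ℝ → ℂ, Measurable f →
      Integrable (fun x => ‖f x‖ ^ 2 * w x) (volume.restrict S) →
      ∀ ε > 0, ∃ (F : Finset Λ) (c : Λ → ℂ),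
        ∫ x in S, ‖f x - ∑ l ∈ F, c l * expFun l.1 x‖ ^ 2 * w x < ε) ∧
  ∃ K ≥ (1 : ℝ), ∀ (F : Finset Λ) (c : Λ → ℂ),
    (1 / K) * ∑ l ∈ F, ‖c l‖ ^ 2 ≤ ∫ x in S, ‖∑ l ∈ F, c l * expFun l.1 x‖ ^ 2 * w x ∧
    ∫ x in S, ‖∑ l ∈ F, c l * expFun l.1 x‖ ^ 2 * w x ≤ K * ∑ l ∈ F, ‖c l‖ ^ 2

section ExpSum

variable {Λ : Set ℝ}

noncomputable def expSum (F : Finset Λ) (c : Λ → ℂ) (x : ℝ) : ℂ := ∑ l ∈ F, c l * expFun l.1 x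

lemma norm_expFun (l x : ℝ) : ‖expFun l x‖ = 1 := by
  rw [expFun, show 2 * (π : ℂ) * Complex.I * l * x = ((2 * π * l * x : ℝ) : ℂ) * Complex.I by
    push_cast; ring]
  exact Complex.norm_exp_ofReal_mul_I _

lemma expFun_add (l x y : ℝ) : expFun l (x + y) = expFun l x * expFun l y := by
  simp only [expFun, ← Complex.exp_add]
  congr 1
  push_cast
  ring

lemma continuous_expSum (F : Finset Λ) (c : Λ → ℂ) : Continuous (expSum F c) :=
  continuous_finsetSum _ fun _ _ => continuous_const.mul <| Complex.continuous_exp.comp <|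
    continuous_const.mul Complex.continuous_ofReal

lemma norm_expSum_le (F : Finset Λ) (c : Λ → ℂ) (x : ℝ) : ‖expSum F c x‖ ≤ ∑ l ∈ F, ‖c l‖ :=
  (norm_sum_le _ _).trans_eq <| Finset.sum_congr rfl fun l _ => by rw [norm_mul, norm_expFun, mul_one]

lemma expSum_sub (F : Finset Λ) (c : Λ → ℂ) (x t : ℝ) :
    expSum F c (x - t) = expSum F (fun l => c l * expFun l.1 (-t)) x :=
  Finset.sum_congr rfl fun l _ => by
    rw [sub_eq_add_neg, expFun_add]
    ring

end ExpSum

lemma norm_indicator_one_le {α R : Type*} [SeminormedRing R] [NormOneClass R] (B : Set α)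
    (x : α) : ‖B.indicator (1 : α → R) x‖ ≤ 1 := by
  simpa using norm_indicator_le_norm_self (1 : α → R) x

section WeightedIntegrals

variable {α E R : Type*} [MeasurableSpace α] [SeminormedAddCommGroup E] [SeminormedRing R]
  [NormOneClass R] {μ : Measure α} {w : α → ℝ}

lemma MeasureTheory.Integrable.norm_sq_mul_of_norm_le (hw : Integrable w μ) {f : α → E}
    (hf : AEStronglyMeasurable f μ) {M : ℝ} (hM : ∀ x, ‖f x‖ ≤ M) :
    Integrable (fun x => ‖f x‖ ^ 2 * w x) μ :=
  hw.bdd_mul (hf.norm.pow 2) <| ae_of_all _ fun x => by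
    rw [norm_pow, norm_norm]
    exact pow_le_pow_left₀ (norm_nonneg _) (hM x) 2

lemma integral_norm_sq_mul_le (hw : 0 ≤ᵐ[μ] w) {f g : α → E}
    (hg : Integrable (fun x => ‖g x‖ ^ 2 * w x) μ)
    (hfg : Integrable (fun x => ‖f x - g x‖ ^ 2 * w x) μ) :
    ∫ x, ‖f x‖ ^ 2 * w x ∂μ ≤
      2 * ∫ x, ‖g x‖ ^ 2 * w x ∂μ + 2 * ∫ x, ‖f x - g x‖ ^ 2 * w x ∂μ := by
  rw [← integral_const_mul, ← integral_const_mul, ← integral_add (hg.const_mul 2) (hfg.const_mul 2)]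
  refine integral_mono_of_nonneg (hw.mono fun x hx => mul_nonneg (sq_nonneg _) hx)
    ((hg.const_mul 2).add (hfg.const_mul 2)) (hw.mono fun x hx => ?_)
  have hsq : ‖f x‖ ^ 2 ≤ 2 * ‖g x‖ ^ 2 + 2 * ‖f x - g x‖ ^ 2 := by
    nlinarith [norm_le_norm_add_norm_sub' (f x) (g x), norm_nonneg (f x),
      sq_nonneg (‖g x‖ - ‖f x - g x‖)]
  nlinarith [mul_le_mul_of_nonneg_right hsq hx]

lemma setIntegral_norm_sq_indicator_one_mul {S B : Set α} (hB : MeasurableSet B) (hBS : B ⊆ S) :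
    ∫ x in S, ‖B.indicator (1 : α → R) x‖ ^ 2 * w x ∂μ = ∫ x in B, w x ∂μ := by
  have h : (fun x => ‖B.indicator (1 : α → R) x‖ ^ 2 * w x) = B.indicator w := by
    ext x
    by_cases hx : x ∈ B <;> simp [hx]
  rw [h, setIntegral_indicator hB, Set.inter_eq_self_of_subset_right hBS]

lemma setIntegral_norm_sq_mul_le_of_sub_indicator {S B : Set α} (hB : MeasurableSet B)
    (hBS : B ⊆ S) (hw : IntegrableOn w S μ) (hw0 : 0 ≤ᵐ[μ.restrict S] w) {P : α → R}
    (hP : AEStronglyMeasurable P μ) {M : ℝ} (hM : ∀ x, ‖P x‖ ≤ M) :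
    ∫ x in S, ‖P x‖ ^ 2 * w x ∂μ ≤
      2 * ∫ x in B, w x ∂μ + 2 * ∫ x in S, ‖B.indicator 1 x - P x‖ ^ 2 * w x ∂μ := by
  have hg : AEStronglyMeasurable (B.indicator (1 : α → R)) (μ.restrict S) :=
    aestronglyMeasurable_const.indicator hB
  have hsplit := integral_norm_sq_mul_le hw0 (Integrable.norm_sq_mul_of_norm_le hw hg
    (norm_indicator_one_le B)) (Integrable.norm_sq_mul_of_norm_le hw (hP.restrict.sub hg)
      fun x => (norm_sub_le _ _).trans (add_le_add (hM x) (norm_indicator_one_le B x)))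
  simpa only [norm_sub_rev (P _), setIntegral_norm_sq_indicator_one_mul hB hBS] using hsplit

lemma mul_measureReal_le_of_sub_indicator {S B : Set α} (hB : MeasurableSet B) (hBS : B ⊆ S)
    (hμB : μ B ≠ ⊤) (hw : IntegrableOn w S μ) (hw0 : 0 ≤ᵐ[μ.restrict S] w) {η : ℝ} (hη : 0 ≤ η)
    (hηw : ∀ᵐ x ∂μ.restrict B, η ≤ w x) {P : α → R} (hP : AEStronglyMeasurable P μ) {M : ℝ}
    (hM : ∀ x, ‖P x‖ ≤ M) :
    η * μ.real B ≤
      2 * η * ∫ x in B, ‖P x‖ ^ 2 ∂μ + 2 * ∫ x in S, ‖B.indicator 1 x - P x‖ ^ 2 * w x ∂μ := by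
  have hgP : AEStronglyMeasurable (fun x => B.indicator (1 : α → R) x - P x) μ :=
    (aestronglyMeasurable_const.indicator hB).sub hP
  have hgPM : ∀ x, ‖B.indicator (1 : α → R) x - P x‖ ≤ 1 + M := fun x =>
    (norm_sub_le _ _).trans (add_le_add (norm_indicator_one_le B x) (hM x))
  have hconst : IntegrableOn (fun _ => η) B μ := integrableOn_const hμB
  have hint : IntegrableOn (fun x => ‖B.indicator 1 x - P x‖ ^ 2 * w x) S μ :=
    Integrable.norm_sq_mul_of_norm_le hw hgP.restrict hgPM
  have hsplit := integral_norm_sq_mul_le (μ := μ.restrict B) (f := B.indicator 1) (g := P)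
    (ae_of_all _ fun _ => hη) (Integrable.norm_sq_mul_of_norm_le hconst hP.restrict hM)
    (Integrable.norm_sq_mul_of_norm_le hconst hgP.restrict hgPM)
  rw [setIntegral_norm_sq_indicator_one_mul hB subset_rfl, setIntegral_const, smul_eq_mul,
    integral_mul_const] at hsplit
  have hweight : ∫ x in B, ‖B.indicator 1 x - P x‖ ^ 2 * η ∂μ ≤
      ∫ x in S, ‖B.indicator 1 x - P x‖ ^ 2 * w x ∂μ := by
    refine (integral_mono_of_nonneg (ae_of_all _ fun x => mul_nonneg (sq_nonneg _) hη)
      (hint.mono_set hBS) (hηw.mono fun x hx => mul_le_mul_of_nonneg_left hx (sq_nonneg _))).trans ?_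
    exact setIntegral_mono_set hint (hw0.mono fun x hx => mul_nonneg (sq_nonneg _) hx)
      (ae_of_all _ hBS)
  nlinarith

end WeightedIntegrals

lemma exists_measure_pos_subset_ae_const_le {α : Type*} [MeasurableSpace α] {μ : Measure α}
    {w : α → ℝ} {A : Set α} (hA : MeasurableSet A) (hμA : 0 < μ A)
    (hw : AEMeasurable w (μ.restrict A)) (hpos : ∀ᵐ x ∂μ.restrict A, 0 < w x) :
    ∃ B ⊆ A, MeasurableSet B ∧ 0 < μ B ∧ ∃ η > 0, ∀ᵐ x ∂μ.restrict B, η ≤ w x := by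
  set s : ℕ → Set α := fun n => A ∩ {x | 1 / ((n : ℝ) + 1) ≤ hw.mk w x}
  have hs : ∀ n, MeasurableSet (s n) := fun n =>
    hA.inter (measurableSet_le measurable_const hw.measurable_mk)
  suffices h : ∃ n, 0 < μ (s n) by
    obtain ⟨n, hn⟩ := h
    refine ⟨s n, Set.inter_subset_left, hs n, hn, 1 / ((n : ℝ) + 1), by positivity, ?_⟩
    filter_upwards [ae_restrict_of_ae_restrict_of_subset Set.inter_subset_left hw.ae_eq_mk,
      ae_restrict_mem (hs n)] with x hx hxs
    exact hx ▸ hxs.2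
  by_contra! h
  have hnull : ∀ᵐ x ∂μ, ∀ n, x ∉ s n :=
    ae_all_iff.2 fun n => measure_eq_zero_iff_ae_notMem.1 (nonpos_iff_eq_zero.1 (h n))
  have hfalse : ∀ᵐ x ∂μ.restrict A, False := by
    filter_upwards [hpos, hw.ae_eq_mk, ae_restrict_mem hA, ae_restrict_of_ae hnull]
      with x hx hxmk hxA hxs
    obtain ⟨n, hn⟩ := exists_nat_one_div_lt (hxmk ▸ hx)
    exact hxs n ⟨hxA, hn.le⟩
  rw [Filter.eventually_false_iff_eq_bot, ae_eq_bot, Measure.restrict_eq_zero] at hfalse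
  exact hμA.ne' hfalse

lemma mul_setIntegral_le_setIntegral_sub_mul {S A : Set ℝ} {w f : ℝ → ℝ} {c t : ℝ}
    (hA : MeasurableSet A) (hc : 0 ≤ c) (hf : ∀ y, 0 ≤ f y) (hw : ∀ᵐ x ∂volume.restrict S, 0 ≤ w x)
    (hAt : ∀ y ∈ A, y + t ∈ S ∧ c ≤ w (y + t))
    (hint : IntegrableOn (fun x => f (x - t) * w x) S) :
    c * ∫ y in A, f y ≤ ∫ x in S, f (x - t) * w x := by
  set B := (fun x => x - t) ⁻¹' A
  have hBS : B ⊆ S := fun x hx => by simpa using (hAt _ hx).1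
  rw [← (measurePreserving_sub_right volume t).setIntegral_preimage_emb
    (measurableEmbedding_subRight t), ← integral_const_mul]
  calc ∫ x in B, c * f (x - t) ≤ ∫ x in B, f (x - t) * w x :=
        integral_mono_of_nonneg (ae_of_all _ fun x => mul_nonneg hc (hf _)) (hint.mono_set hBS) <|
          ae_restrict_of_forall_mem (hA.preimage (measurable_sub_const t)) fun x hx => by
            show c * f (x - t) ≤ f (x - t) * w x
            rw [mul_comm (f _)]
            exact mul_le_mul_of_nonneg_right (by simpa using (hAt _ hx).2) (hf _)
    _ ≤ ∫ x in S, f (x - t) * w x :=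
        setIntegral_mono_set hint (hw.mono fun x hx => mul_nonneg (hf _) hx) (ae_of_all _ hBS)

lemma IsRieszBasisExpW.exists_translate_le {S : Set ℝ} {w : ℝ → ℝ} {Λ : Set ℝ}
    (h : IsRieszBasisExpW S w Λ) : ∃ C > 0, ∀ (F : Finset Λ) (c : Λ → ℂ) (t : ℝ),
      ∫ x in S, ‖expSum F c (x - t)‖ ^ 2 * w x ≤ C * ∫ x in S, ‖expSum F c x‖ ^ 2 * w x := by
  obtain ⟨K, hK1, hK⟩ := h.2
  have hK0 : 0 < K := one_pos.trans_le hK1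
  refine ⟨K ^ 2, by positivity, fun F c t => ?_⟩
  have hcoeff : ∑ l ∈ F, ‖c l * expFun l.1 (-t)‖ ^ 2 = ∑ l ∈ F, ‖c l‖ ^ 2 := by
    simp only [norm_mul, norm_expFun, mul_one]
  have hlower : ∑ l ∈ F, ‖c l‖ ^ 2 ≤ K * ∫ x in S, ‖expSum F c x‖ ^ 2 * w x := by
    have := (hK F c).1
    rwa [one_div, inv_mul_le_iff₀ hK0] at this
  simp_rw [expSum_sub]
  calc ∫ x in S, ‖expSum F (fun l => c l * expFun l.1 (-t)) x‖ ^ 2 * w x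
      ≤ K * ∑ l ∈ F, ‖c l‖ ^ 2 := hcoeff ▸ (hK F _).2
    _ ≤ K * (K * ∫ x in S, ‖expSum F c x‖ ^ 2 * w x) := by gcongr
    _ = K ^ 2 * ∫ x in S, ‖expSum F c x‖ ^ 2 * w x := by ring

lemma IsRieszBasisExpW.exists_expSum_approx_indicator {S B : Set ℝ} {w : ℝ → ℝ} {Λ : Set ℝ}
    (h : IsRieszBasisExpW S w Λ) (hw : IntegrableOn w S) (hw0 : 0 ≤ᵐ[volume.restrict S] w)
    (hB : MeasurableSet B) (hBS : B ⊆ S) (ha : 0 < volume.real B)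
    {ε η : ℝ} (hε : 0 < ε) (hη : 0 < η) (hwε : ∀ x ∈ B, w x ≤ ε)
    (hηw : ∀ᵐ x ∂volume.restrict B, η ≤ w x) :
    ∃ (F : Finset Λ) (d : Λ → ℂ),
      ∫ x in S, ‖expSum F d x‖ ^ 2 * w x ≤ 4 * (ε * volume.real B) ∧
      volume.real B / 4 ≤ ∫ x in B, ‖expSum F d x‖ ^ 2 := by
  set a := volume.real B
  have hBfin : volume B ≠ ⊤ := (ENNReal.toReal_pos_iff.1 ha).2.ne
  have hg : AEStronglyMeasurable (B.indicator (1 : ℝ → ℂ)) volume :=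
    aestronglyMeasurable_const.indicator hB
  obtain ⟨F, d, happrox⟩ := h.1 (B.indicator 1) (measurable_one.indicator hB)
    (Integrable.norm_sq_mul_of_norm_le hw hg.restrict (norm_indicator_one_le B))
    (min (ε * a) (η * a / 4)) (by positivity)
  have happrox : ∫ x in S, ‖B.indicator 1 x - expSum F d x‖ ^ 2 * w x < min (ε * a) (η * a / 4) :=
    happrox
  have hP := (continuous_expSum F d).aestronglyMeasurable (μ := volume)
  have hwB : ∫ x in B, w x ≤ ε * a :=
    (setIntegral_mono_on (hw.mono_set hBS) (integrableOn_const hBfin) hB hwε).trans_eq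
      (by rw [setIntegral_const, smul_eq_mul, mul_comm])
  have hupper := setIntegral_norm_sq_mul_le_of_sub_indicator hB hBS hw hw0 hP (norm_expSum_le F d)
  have hlower := mul_measureReal_le_of_sub_indicator hB hBS hBfin hw hw0 hη.le hηw hP
    (norm_expSum_le F d)
  refine ⟨F, d, ?_, ?_⟩
  · linarith [min_le_left (ε * a) (η * a / 4)]
  · nlinarith [min_le_right (ε * a) (η * a / 4)]

theorem no_riesz_basis_weighted_general (S : Set ℝ)
    (hSb : Bornology.IsBounded S)
    (w : ℝ → ℝ) (hw1 : IntegrableOn w S) (hwpos : ∀ᵐ x ∂volume.restrict S, 0 < w x)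
    (hosc : ∃ c > (0 : ℝ), ∀ ε > (0 : ℝ), ∃ A ⊆ S, MeasurableSet A ∧ 0 < volume A ∧
      ∃ t : ℝ, (∀ x ∈ A, w x < ε) ∧ ∀ x ∈ A, x + t ∈ S ∧ c < w (x + t)) :
    ¬ ∃ Λ : Set ℝ, IsRieszBasisExpW S w Λ := by
  rintro ⟨Λ, hΛ⟩
  obtain ⟨C, hC, htranslate⟩ := hΛ.exists_translate_le
  obtain ⟨c, hc, hosc⟩ := hosc
  obtain ⟨A, hAS, hAm, hA, t, hAw, hAt⟩ := hosc (c / (32 * C)) (by positivity)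
  obtain ⟨B, hBA, hBm, hB, η, hη, hηw⟩ := exists_measure_pos_subset_ae_const_le hAm hA
    (hw1.mono_set hAS).aemeasurable (ae_restrict_of_ae_restrict_of_subset hAS hwpos)
  have hBS := hBA.trans hAS
  have ha : 0 < volume.real B := ENNReal.toReal_pos hB.ne' (hSb.subset hBS).measure_lt_top.ne
  have hw0 : ∀ᵐ x ∂volume.restrict S, 0 ≤ w x := hwpos.mono fun _ => le_of_lt
  obtain ⟨F, d, hupper, hmass⟩ := hΛ.exists_expSum_approx_indicator hw1 hw0 hBm hBS ha
    (by positivity) hη (fun x hx => (hAw x (hBA hx)).le) hηw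
  have hshift := mul_setIntegral_le_setIntegral_sub_mul hBm hc.le
    (fun y => sq_nonneg ‖expSum F d y‖) hw0
    (fun y hy => ⟨(hAt y (hBA hy)).1, (hAt y (hBA hy)).2.le⟩)
    (Integrable.norm_sq_mul_of_norm_le hw1
      ((continuous_expSum F d).comp (continuous_sub_right t)).aestronglyMeasurable
      fun x => norm_expSum_le F d (x - t))
  have hcontra : c * (volume.real B / 4) ≤ c * volume.real B / 8 := calc
    c * (volume.real B / 4) ≤ c * ∫ x in B, ‖expSum F d x‖ ^ 2 := by gcongr
    _ ≤ ∫ x in S, ‖expSum F d (x - t)‖ ^ 2 * w x := hshift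
    _ ≤ C * ∫ x in S, ‖expSum F d x‖ ^ 2 * w x := htranslate F d t
    _ ≤ C * (4 * (c / (32 * C) * volume.real B)) := by gcongr
    _ = c * volume.real B / 8 := by field_simp; ring
  nlinarith [mul_pos hc ha]

/-- If the weight `w` oscillates (sets where `w < ε` translate inside `S` to sets where
`w > c`), then no exponential system is a Riesz basis for `L²(S, w dx)`. -/
theorem no_riesz_basis_weighted (S : Set ℝ) (hSm : MeasurableSet S)
    (hSb : Bornology.IsBounded S) (hS : 0 < volume S)
    (w : ℝ → ℝ) (hw1 : IntegrableOn w S) (hwpos : ∀ᵐ x ∂volume.restrict S, 0 < w x)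
    (hosc : ∃ c > (0 : ℝ), ∀ ε > (0 : ℝ), ∃ A ⊆ S, MeasurableSet A ∧ 0 < volume A ∧
      ∃ t : ℝ, (∀ x ∈ A, w x < ε) ∧ ∀ x ∈ A, x + t ∈ S ∧ c < w (x + t)) :
    ¬ ∃ Λ : Set ℝ, IsRieszBasisExpW S w Λ :=
  no_riesz_basis_weighted_general S hSb w hw1 hwpos hosc
end
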